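/- arXiv:1409.2635 — 4 statements merged into one kernel-verified Lean document; each statement's English description precedes it below -/
import Mathlib

section
/- Let H be a separable infinite-dimensional complex Hilbert space and let (T_n)_{n≥1} be a diskcyclic sequence of bounded linear operators on H with diskcyclic vector x. Then the sequence (T_n ⊕ I)_{n≥1} of bounded linear operators on H ⊕ H (where I is the identity operator on H) is subspace-diskcyclic with respect to the closed subspace M = H ⊕ {0}, with subspace-diskcyclic vector x ⊕ 0. -/
open Pointwise

private lemma prod_smul_apply {H : Type*} [NormedAddCommGroup H] [InnerProductSpace ℂ H]
    (S : H →L[ℂ] H) (α : ℂ) (x : H) :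
    α • (S.prodMap (ContinuousLinearMap.id ℂ H)) (x, 0) = (α • S x, (0 : H)) := by
  simp [Prod.smul_mk]

private lemma dist_prod_zero {H : Type*} [NormedAddCommGroup H] [InnerProductSpace ℂ H]
    (a b : H) : dist (a, (0 : H)) (b, (0 : H)) = dist a b := by
  simp [Prod.dist_eq, dist_nonneg]

/-- if `(T n)` is a diskcyclic sequence on a separable infinite-dimensional
Hilbert space `H` with diskcyclic vector `x`, then `(T n ⊕ I)` on `H ⊕ H` is
subspace-diskcyclic with respect to `M = H ⊕ {0}` with subspace-diskcyclic vector
`x ⊕ 0`. -/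
theorem subspace_diskcyclic_of_diskcyclic_prod
    {H : Type*} [NormedAddCommGroup H] [InnerProductSpace ℂ H] [CompleteSpace H]
    [TopologicalSpace.SeparableSpace H] (hinf : ¬ FiniteDimensional ℂ H)
    (T : ℕ → H →L[ℂ] H) (x : H)
    (hx : Dense {y : H | ∃ (n : ℕ) (α : ℂ), ‖α‖ ≤ 1 ∧ y = α • T n x}) :
    ({p : H × H | p.2 = 0} : Set (H × H)) ⊆
      closure ({y : H × H | ∃ (n : ℕ) (α : ℂ), 0 < ‖α‖ ∧ ‖α‖ ≤ 1 ∧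
          y = α • ((T n).prodMap (ContinuousLinearMap.id ℂ H)) (x, 0)} ∩
        {p : H × H | p.2 = 0}) := by
  -- H is nontrivial
  have hv : ∃ v : H, v ≠ 0 := by
    by_contra h
    push_neg at h
    have : Subsingleton H := ⟨fun a b => by rw [h a, h b]⟩
    exact hinf inferInstance
  obtain ⟨v, hv⟩ := hv
  -- some T n x ≠ 0
  have hn0 : ∃ n, T n x ≠ 0 := by
    by_contra h
    push_neg at h
    have hsub : {y : H | ∃ (n : ℕ) (α : ℂ), ‖α‖ ≤ 1 ∧ y = α • T n x} ⊆ {0} := by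
      rintro y ⟨n, α, -, rfl⟩
      simp [h n]
    have h1 : v ∈ closure {y : H | ∃ (n : ℕ) (α : ℂ), ‖α‖ ≤ 1 ∧ y = α • T n x} := by
      rw [hx.closure_eq]; trivial
    have h2 : v ∈ closure ({0} : Set H) := closure_mono hsub h1
    rw [closure_singleton] at h2
    exact hv h2
  obtain ⟨n₀, hn₀⟩ := hn0
  have hTpos : 0 < ‖T n₀ x‖ := norm_pos_iff.mpr hn₀
  rintro ⟨a, b⟩ hb
  simp only [Set.mem_setOf_eq] at hb
  subst hb
  rw [Metric.mem_closure_iff]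
  intro ε hε
  obtain ⟨y, ⟨n, α, hα1, rfl⟩, hyd⟩ := hx.exists_dist_lt a (half_pos hε)
  by_cases hα : α = 0
  · -- a is within ε/2 of 0; use a small nonzero scalar with T n₀ x
    subst hα
    simp only [zero_smul, dist_zero_right] at hyd
    set r : ℝ := min (ε / (2 * ‖T n₀ x‖)) 1 with hr
    have hr0 : 0 < r := lt_min (by positivity) one_pos
    have hr1 : r ≤ 1 := min_le_right _ _
    have hrnorm : ‖(r : ℂ)‖ = r := by
      rw [Complex.norm_real, Real.norm_of_nonneg hr0.le]
    refine ⟨((r : ℂ)) • ((T n₀).prodMap (ContinuousLinearMap.id ℂ H)) (x, 0),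
      ⟨⟨n₀, (r : ℂ), by rw [hrnorm]; exact hr0, by rw [hrnorm]; exact hr1, rfl⟩, ?_⟩, ?_⟩
    · rw [prod_smul_apply]; rfl
    · rw [prod_smul_apply, dist_prod_zero]
      have hnorm : ‖(r : ℂ) • T n₀ x‖ ≤ ε / 2 := by
        rw [norm_smul, hrnorm]
        calc r * ‖T n₀ x‖ ≤ (ε / (2 * ‖T n₀ x‖)) * ‖T n₀ x‖ :=
              mul_le_mul_of_nonneg_right (min_le_left _ _) (norm_nonneg _)
          _ = ε / 2 := by field_simp
      calc dist a ((r : ℂ) • T n₀ x) ≤ ‖a‖ + ‖(r : ℂ) • T n₀ x‖ := by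
            simpa [dist_eq_norm] using norm_sub_le a ((r : ℂ) • T n₀ x)
        _ < ε / 2 + ε / 2 := by linarith [lt_of_le_of_lt (le_refl ‖a‖) hyd]
        _ = ε := by ring
  · refine ⟨α • ((T n).prodMap (ContinuousLinearMap.id ℂ H)) (x, 0),
      ⟨⟨n, α, norm_pos_iff.mpr hα, hα1, rfl⟩, ?_⟩, ?_⟩
    · rw [prod_smul_apply]; rfl
    · rw [prod_smul_apply, dist_prod_zero]
      linarith
end

section
/- Let H be a separable infinite-dimensional complex Hilbert space, M a nontrivial closed subspace of H, and (T_n)_{n≥1} a sequence of bounded linear operators on H. The following are equivalent: (i) (T_n) is subspace-disk topologically transitive with respect to M; (ii) for all nonempty relatively open subsets U ⊆ M and V ⊆ M there exist n ∈ ℕ and α ∈ ℂ with |α| ≥ 1 such that T_n⁻¹(α • U) ∩ V ≠ ∅ and T_n(M) ⊆ M; (iii) for all nonempty relatively open subsets U ⊆ M and V ⊆ M there exist n ∈ ℕ and α ∈ ℂ with |α| ≥ 1 such that T_n⁻¹(α • U) ∩ V is a nonempty relatively open subset of M. -/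
open Pointwise

/-- A subset `S` of a Hilbert space is relatively open in the subspace `M`. -/
def RelOpenIn {H : Type*} [NormedAddCommGroup H] [InnerProductSpace ℂ H]
    (M : Submodule ℂ H) (S : Set H) : Prop :=
  IsOpen ((↑) ⁻¹' S : Set ↥M)

/-- `(T n)` is subspace-disk topologically transitive with respect to `M`. -/
def SubspaceDiskTransitive {H : Type*} [NormedAddCommGroup H] [InnerProductSpace ℂ H]
    (T : ℕ → H →L[ℂ] H) (M : Submodule ℂ H) : Prop :=
  ∀ U V : Set H, U ⊆ M → V ⊆ M → U.Nonempty → V.Nonempty →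
    RelOpenIn M U → RelOpenIn M V →
    ∃ (n : ℕ) (α : ℂ), 1 ≤ ‖α‖ ∧
      ∃ W : Set H, W ⊆ M ∧ W.Nonempty ∧ RelOpenIn M W ∧ W ⊆ (T n) ⁻¹' (α • U) ∩ V

/-! Invariance of `M` under a linear map is detected on any nonempty open subset of `M`, since
the vectors of `M` sent into `M` form a submodule of `M`, and a submodule with nonempty interior
is everything. Conversely, an invariant `M` makes `T ⁻¹' (α • U) ∩ V` relatively open, as the
restriction of `T` to `M` is continuous and `α • ·` is a homeomorphism of `M` for `α ≠ 0`. -/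

theorem Submodule.mapsTo_of_isOpen_of_mapsTo {𝕜 E : Type*} [NontriviallyNormedField 𝕜]
    [AddCommGroup E] [TopologicalSpace E] [IsTopologicalAddGroup E] [Module 𝕜 E]
    [ContinuousSMul 𝕜 E]
    (M : Submodule 𝕜 E) (f : E →ₗ[𝕜] E) {W : Set M} (hWo : IsOpen W) (hWne : W.Nonempty)
    (hfW : ∀ x ∈ W, f x ∈ M) : Set.MapsTo f M M := by
  have htop : (M.comap f).comap M.subtype = ⊤ :=
    Submodule.eq_top_of_nonempty_interior' _ (hWne.mono (interior_maximal hfW hWo))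
  intro x hx
  exact (htop ▸ Submodule.mem_top : (⟨x, hx⟩ : M) ∈ (M.comap f).comap M.subtype)

namespace RelOpenIn

variable {H : Type*} [NormedAddCommGroup H] [InnerProductSpace ℂ H] {M : Submodule ℂ H}
  {U V : Set H}

theorem inter (hU : RelOpenIn M U) (hV : RelOpenIn M V) : RelOpenIn M (U ∩ V) :=
  IsOpen.inter hU hV

theorem smul₀ (hU : RelOpenIn M U) {α : ℂ} (hα : α ≠ 0) : RelOpenIn M (α • U) := by
  unfold RelOpenIn
  rw [show ((↑) : M → H) = M.subtype from rfl, (IsUnit.mk0 α hα).preimage_smul_set]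
  exact IsOpen.smul₀ hU hα

theorem preimage (hU : RelOpenIn M U) {T : H →L[ℂ] H} (hT : Set.MapsTo T M M) :
    RelOpenIn M (T ⁻¹' U) :=
  IsOpen.preimage (T.continuous.restrict hT) hU

end RelOpenIn

theorem subspaceDiskTransitive_tfae_general
    {H : Type*} [NormedAddCommGroup H] [InnerProductSpace ℂ H]
    (M : Submodule ℂ H) (T : ℕ → H →L[ℂ] H) :
    List.TFAE
      [SubspaceDiskTransitive T M,
       ∀ U V : Set H, U ⊆ M → V ⊆ M → U.Nonempty → V.Nonempty →
         RelOpenIn M U → RelOpenIn M V →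
         ∃ (n : ℕ) (α : ℂ), 1 ≤ ‖α‖ ∧ ((T n) ⁻¹' (α • U) ∩ V).Nonempty ∧
           (T n) '' M ⊆ M,
       ∀ U V : Set H, U ⊆ M → V ⊆ M → U.Nonempty → V.Nonempty →
         RelOpenIn M U → RelOpenIn M V →
         ∃ (n : ℕ) (α : ℂ), 1 ≤ ‖α‖ ∧ ((T n) ⁻¹' (α • U) ∩ V).Nonempty ∧
           RelOpenIn M ((T n) ⁻¹' (α • U) ∩ V)] := by
  tfae_have 1 → 2 := by
    intro h U V hU hV hUne hVne hUo hVo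
    obtain ⟨n, α, hα, W, hWM, hWne, hWo, hWsub⟩ := h U V hU hV hUne hVne hUo hVo
    obtain ⟨w, hw⟩ := hWne
    have hαUM : α • U ⊆ M := Set.smul_set_subset_iff.2 fun u hu => M.smul_mem α (hU hu)
    have hTM : Set.MapsTo (T n) M M := M.mapsTo_of_isOpen_of_mapsTo (T n).toLinearMap hWo
      ⟨⟨w, hWM hw⟩, hw⟩ fun x hx => hαUM (hWsub hx).1
    exact ⟨n, α, hα, ⟨w, hWsub hw⟩, hTM.image_subset⟩
  tfae_have 2 → 3 := by
    intro h U V hU hV hUne hVne hUo hVo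
    obtain ⟨n, α, hα, hne, hTM⟩ := h U V hU hV hUne hVne hUo hVo
    have hα₀ : α ≠ 0 := norm_pos_iff.1 (zero_lt_one.trans_le hα)
    exact ⟨n, α, hα, hne,
      ((hUo.smul₀ hα₀).preimage (Set.mapsTo_iff_image_subset.2 hTM)).inter hVo⟩
  tfae_have 3 → 1 := fun h U V hU hV hUne hVne hUo hVo =>
    let ⟨n, α, hα, hne, ho⟩ := h U V hU hV hUne hVne hUo hVo
    ⟨n, α, hα, _, fun _ hx => hV hx.2, hne, ho, subset_rfl⟩
  tfae_finish

/-- equivalent formulations of subspace-disk topological transitivity. -/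
theorem subspaceDiskTransitive_tfae
    {H : Type*} [NormedAddCommGroup H] [InnerProductSpace ℂ H] [CompleteSpace H]
    [TopologicalSpace.SeparableSpace H] (hinf : ¬ FiniteDimensional ℂ H)
    (M : Submodule ℂ H) (hMc : IsClosed (M : Set H)) (hM₁ : M ≠ ⊥) (hM₂ : M ≠ ⊤)
    (T : ℕ → H →L[ℂ] H) :
    List.TFAE
      [SubspaceDiskTransitive T M,
       ∀ U V : Set H, U ⊆ M → V ⊆ M → U.Nonempty → V.Nonempty →
         RelOpenIn M U → RelOpenIn M V →
         ∃ (n : ℕ) (α : ℂ), 1 ≤ ‖α‖ ∧ ((T n) ⁻¹' (α • U) ∩ V).Nonempty ∧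
           (T n) '' M ⊆ M,
       ∀ U V : Set H, U ⊆ M → V ⊆ M → U.Nonempty → V.Nonempty →
         RelOpenIn M U → RelOpenIn M V →
         ∃ (n : ℕ) (α : ℂ), 1 ≤ ‖α‖ ∧ ((T n) ⁻¹' (α • U) ∩ V).Nonempty ∧
           RelOpenIn M ((T n) ⁻¹' (α • U) ∩ V)] :=
  subspaceDiskTransitive_tfae_general M T
end

section
/- Let H be a separable infinite-dimensional complex Hilbert space, M a nontrivial closed subspace of H, and (T_n)_{n≥1} a sequence of bounded linear operators on H. If (T_n) is subspace-disk topologically transitive with respect to M, then the set DC((T_n), M) of subspace-diskcyclic vectors for (T_n) with respect to M is a dense subset of M. -/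
open Pointwise

/-!
A Birkhoff transitivity argument, carried out inside the complete separable space `M`.
For each set `b` of a countable basis of `M`, transitivity shows that the interior of
`{x | the disk orbit of x meets b}` is dense; by Baire's theorem these interiors have a dense
intersection, and every point of it has a disk orbit meeting every basic set of `M`.
The orbit maps need not preserve `M`, so the sets being intersected are interiors of the
hitting sets rather than the hitting sets themselves.
-/

section Birkhoff

variable {X : Type*} [TopologicalSpace X]

theorem dense_setOf_dense_of_exists_isOpen_subset [BaireSpace X] [SecondCountableTopology X]
    (O : X → Set X)
    (hO : ∀ U V : Set X, IsOpen U → U.Nonempty → IsOpen V → V.Nonempty →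
      ∃ W ⊆ V, IsOpen W ∧ W.Nonempty ∧ ∀ x ∈ W, (O x ∩ U).Nonempty) :
    Dense {x | Dense (O x)} := by
  obtain ⟨ℬ, hℬc, hℬne, hℬ⟩ := TopologicalSpace.exists_countable_basis X
  have hdense : ∀ b ∈ ℬ, Dense (interior {x | (O x ∩ b).Nonempty}) := by
    intro b hb
    refine dense_iff_inter_open.2 fun V hV hVne => ?_
    have hbne : b.Nonempty := Set.nonempty_iff_ne_empty.2 fun h => hℬne (h ▸ hb)
    obtain ⟨W, hWV, hW, ⟨w, hw⟩, hWO⟩ := hO b V (hℬ.isOpen hb) hbne hV hVne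
    exact ⟨w, hWV hw, interior_maximal hWO hW hw⟩
  refine (dense_biInter_of_isOpen (fun _ _ => isOpen_interior) hℬc hdense).mono ?_
  intro x hx
  refine hℬ.dense_iff.2 fun b hb _ => ?_
  rw [Set.inter_comm]
  exact interior_subset (s := {x | (O x ∩ b).Nonempty}) (Set.mem_iInter₂.1 hx b hb)

theorem dense_preimage_coe_iff {s t : Set X} :
    Dense ((↑) ⁻¹' t : Set s) ↔ s ⊆ closure (t ∩ s) := by
  rw [Subtype.dense_iff, Subtype.image_preimage_coe, Set.inter_comm]

end Birkhoff

section DiskOrbit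

variable {H : Type*} [NormedAddCommGroup H]

def diskOrbit [NormedSpace ℂ H] (T : ℕ → H →L[ℂ] H) (x : H) : Set H :=
  {y | ∃ (n : ℕ) (α : ℂ), 0 < ‖α‖ ∧ ‖α‖ ≤ 1 ∧ y = α • T n x}

theorem inv_smul_mem_diskOrbit [NormedSpace ℂ H] (T : ℕ → H →L[ℂ] H) (x : H) (n : ℕ) {α : ℂ}
    (hα : 1 ≤ ‖α‖) :
    α⁻¹ • T n x ∈ diskOrbit T x :=
  ⟨n, α⁻¹, by rw [norm_inv]; positivity, by rw [norm_inv]; exact inv_le_one_of_one_le₀ hα, rfl⟩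

variable [InnerProductSpace ℂ H]

theorem relOpenIn_image_coe_iff {M : Submodule ℂ H} {U : Set M} :
    RelOpenIn M ((↑) '' U) ↔ IsOpen U := by
  rw [RelOpenIn, Set.preimage_image_eq U Subtype.val_injective]

theorem SubspaceDiskTransitive.exists_isOpen_subset_meets_diskOrbit {T : ℕ → H →L[ℂ] H}
    {M : Submodule ℂ H} (htrans : SubspaceDiskTransitive T M) {U V : Set M}
    (hU : IsOpen U) (hUne : U.Nonempty) (hV : IsOpen V) (hVne : V.Nonempty) :
    ∃ W ⊆ V, IsOpen W ∧ W.Nonempty ∧ ∀ x ∈ W, ((↑) ⁻¹' diskOrbit T x ∩ U).Nonempty := by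
  obtain ⟨n, α, hα, W, hWM, ⟨w, hw⟩, hW, hWUV⟩ :=
    htrans ((↑) '' U) ((↑) '' V) (Subtype.coe_image_subset _ _) (Subtype.coe_image_subset _ _)
      (hUne.image _) (hVne.image _)
      (relOpenIn_image_coe_iff.2 hU) (relOpenIn_image_coe_iff.2 hV)
  have hα₀ : α ≠ 0 := norm_pos_iff.1 (zero_lt_one.trans_le hα)
  refine ⟨((↑) : M → H) ⁻¹' W, fun x hx => ?_, hW, ⟨⟨w, hWM hw⟩, hw⟩, fun x hx => ?_⟩
  · exact Subtype.val_injective.mem_set_image.1 (hWUV hx).2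
  · obtain ⟨_, ⟨u, hu, rfl⟩, hux⟩ := (hWUV hx).1
    refine ⟨u, ?_, hu⟩
    have : (u : H) = α⁻¹ • T n x := by rw [← hux, inv_smul_smul₀ hα₀]
    simpa only [Set.mem_preimage, this] using inv_smul_mem_diskOrbit T x n hα

end DiskOrbit

theorem dense_subspace_diskcyclic_vectors_of_subspaceDiskTransitive_general
    {H : Type*} [NormedAddCommGroup H] [InnerProductSpace ℂ H] [CompleteSpace H]
    [TopologicalSpace.SeparableSpace H]
    (M : Submodule ℂ H) (hMc : IsClosed (M : Set H))
    (T : ℕ → H →L[ℂ] H) (htrans : SubspaceDiskTransitive T M) :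
    (M : Set H) ⊆
      closure ({x : H | (M : Set H) ⊆
          closure ({y : H | ∃ (n : ℕ) (α : ℂ), 0 < ‖α‖ ∧ ‖α‖ ≤ 1 ∧ y = α • T n x}
            ∩ M)} ∩ M) := by
  have : CompleteSpace M := hMc.completeSpace_coe
  have : SecondCountableTopology H := UniformSpace.secondCountable_of_separable H
  have hbaire : Dense {x : M | Dense ((↑) ⁻¹' diskOrbit T x : Set M)} :=
    dense_setOf_dense_of_exists_isOpen_subset _ fun _ _ hU hUne hV hVne =>
      htrans.exists_isOpen_subset_meets_diskOrbit hU hUne hV hVne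
  exact dense_preimage_coe_iff.1 (hbaire.mono fun _ hx => dense_preimage_coe_iff.1 hx)

/-- if `(T n)` is subspace-disk topologically transitive with respect to
`M`, then the set of subspace-diskcyclic vectors with respect to `M` is dense in `M`. -/
theorem dense_subspace_diskcyclic_vectors_of_subspaceDiskTransitive
    {H : Type*} [NormedAddCommGroup H] [InnerProductSpace ℂ H] [CompleteSpace H]
    [TopologicalSpace.SeparableSpace H] (hinf : ¬ FiniteDimensional ℂ H)
    (M : Submodule ℂ H) (hMc : IsClosed (M : Set H)) (hM₁ : M ≠ ⊥) (hM₂ : M ≠ ⊤)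
    (T : ℕ → H →L[ℂ] H) (htrans : SubspaceDiskTransitive T M) :
    (M : Set H) ⊆
      closure ({x : H | (M : Set H) ⊆
          closure ({y : H | ∃ (n : ℕ) (α : ℂ), 0 < ‖α‖ ∧ ‖α‖ ≤ 1 ∧ y = α • T n x}
            ∩ M)} ∩ M) :=
  dense_subspace_diskcyclic_vectors_of_subspaceDiskTransitive_general M hMc T htrans
end

section
/- Let H be a separable infinite-dimensional complex Hilbert space, M a nontrivial closed subspace of H, and (T_n)_{n≥1} a sequence of bounded linear operators on H. If (T_n) is subspace-disk topologically transitive with respect to M, then (T_n) is subspace-diskcyclic with respect to M. -/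
open Pointwise

open TopologicalSpace

/-- `(T n)` is subspace-diskcyclic with respect to `M`. -/
def SubspaceDiskcyclic {H : Type*} [NormedAddCommGroup H] [InnerProductSpace ℂ H]
    (T : ℕ → H →L[ℂ] H) (M : Submodule ℂ H) : Prop :=
  ∃ x : H, (M : Set H) ⊆
    closure ({y : H | ∃ (n : ℕ) (α : ℂ), 0 < ‖α‖ ∧ ‖α‖ ≤ 1 ∧ y = α • T n x} ∩ M)


set_option maxHeartbeats 1000000 in
set_option synthInstance.maxHeartbeats 400000 in
/-- subspace-disk topological transitivity with respect to `M` implies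
subspace-diskcyclicity with respect to `M`. -/
theorem subspaceDiskcyclic_of_subspaceDiskTransitive
    {H : Type*} [NormedAddCommGroup H] [InnerProductSpace ℂ H] [CompleteSpace H]
    [TopologicalSpace.SeparableSpace H] (hinf : ¬ FiniteDimensional ℂ H)
    (M : Submodule ℂ H) (hMc : IsClosed (M : Set H)) (hM₁ : M ≠ ⊥) (hM₂ : M ≠ ⊤)
    (T : ℕ → H →L[ℂ] H) (htrans : SubspaceDiskTransitive T M) :
    SubspaceDiskcyclic T M := by
  haveI : CompleteSpace ↥M := hMc.completeSpace_coe
  haveI : SecondCountableTopology ↥M := inferInstance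
  haveI : BaireSpace ↥M := inferInstance
  obtain ⟨B, hBc, hBne, hB⟩ := TopologicalSpace.exists_countable_basis ↥M
  -- the "good set" for each basic open set b
  set G : Set ↥M → Set ↥M := fun b =>
    ⋃ (n : ℕ) (α : ℂ) (_ : 1 ≤ ‖α‖),
      interior {x : ↥M | T n (x : H) ∈ α • ((↑) '' b : Set H)} with hG
  have hGopen : ∀ b, IsOpen (G b) := by
    intro b
    exact isOpen_iUnion fun n => isOpen_iUnion fun α => isOpen_iUnion fun _ => isOpen_interior
  have hGdense : ∀ b ∈ B, Dense (G b) := by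
    intro b hb
    rw [dense_iff_inter_open]
    intro V hV hVne
    have hbne : b.Nonempty := Set.nonempty_iff_ne_empty.2 (fun h => hBne (h ▸ hb))
    -- apply transitivity to U := ↑b, V' := ↑V
    have hUop : RelOpenIn M ((↑) '' b : Set H) := by
      unfold RelOpenIn
      rw [Set.preimage_image_eq b Subtype.val_injective]
      exact hB.isOpen hb
    have hVop : RelOpenIn M ((↑) '' V : Set H) := by
      unfold RelOpenIn
      rwa [Set.preimage_image_eq V Subtype.val_injective]
    obtain ⟨n, α, hα, W, hWM, hWne, hWop, hWsub⟩ :=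
      htrans ((↑) '' b) ((↑) '' V)
        (by rintro y ⟨x, _, rfl⟩; exact x.2) (by rintro y ⟨x, _, rfl⟩; exact x.2)
        (hbne.image _) (hVne.image _) (hUop) (hVop)
    obtain ⟨w, hw⟩ := hWne
    refine ⟨⟨w, hWM hw⟩, ?_, ?_⟩
    · -- in V
      have := (hWsub hw).2
      obtain ⟨v, hv, hveq⟩ := this
      have : (⟨w, hWM hw⟩ : ↥M) = v := Subtype.ext hveq.symm
      rwa [this]
    · -- in G b
      rw [hG]
      simp only [Set.mem_iUnion]
      refine ⟨n, α, hα, ?_⟩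
      have hsub : ((↑) ⁻¹' W : Set ↥M) ⊆ {x : ↥M | T n (x : H) ∈ α • ((↑) '' b : Set H)} := by
        intro x hx
        exact (hWsub hx).1
      exact interior_maximal hsub hWop (show (⟨w, hWM hw⟩ : ↥M) ∈ ((↑) ⁻¹' W : Set ↥M) from hw)
  -- Baire
  have hdense : Dense (⋂ b ∈ B, G b) :=
    dense_biInter_of_isOpen (fun b _ => hGopen b) hBc (fun b hb => hGdense b hb)
  obtain ⟨x₀, hx₀⟩ := hdense.nonempty
  refine ⟨(x₀ : H), ?_⟩
  intro z hz
  rw [mem_closure_iff]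
  intro O hO hzO
  have hbase : ∃ b ∈ B, (⟨z, hz⟩ : ↥M) ∈ b ∧ b ⊆ ((↑) ⁻¹' O : Set ↥M) :=
    hB.exists_subset_of_mem_open (by exact hzO) (hO.preimage continuous_subtype_val)
  obtain ⟨b, hb, hzb, hbO⟩ := hbase
  have hx₀b : x₀ ∈ G b := by
    have := Set.mem_iInter₂.1 hx₀ b hb
    exact this
  rw [hG] at hx₀b
  simp only [Set.mem_iUnion] at hx₀b
  obtain ⟨n, α, hα, hx₀i⟩ := hx₀b
  have hmem : x₀ ∈ {x : ↥M | T n (x : H) ∈ α • ((↑) '' b : Set H)} := interior_subset hx₀i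
  obtain ⟨u, hu, huT⟩ := hmem
  have hα0 : α ≠ 0 := by
    intro h; rw [h, norm_zero] at hα; linarith
  refine ⟨u, ⟨?_, ?_, ?_⟩⟩
  · obtain ⟨v, hv, rfl⟩ := hu
    exact hbO hv
  · refine ⟨n, α⁻¹, ?_, ?_, ?_⟩
    · simpa [norm_inv] using norm_pos_iff.2 hα0
    · rw [norm_inv]
      exact inv_le_one_of_one_le₀ hα
    · rw [← huT, smul_smul, inv_mul_cancel₀ hα0, one_smul]
  · obtain ⟨v, hv, rfl⟩ := hu
    exact v.2
end
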